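/- arXiv:2303.07154 — 3 statements merged into one kernel-verified Lean document; each statement's English description precedes it below -/
import Mathlib

section
/- Let A be a finite nonempty index set partitioned into disjoint sets U and L with U nonempty, where S_i ≥ 0 for all i ∈ U and S_i < 0 for all i ∈ L, and suppose L is nonempty. Let S_max = max_{i∈U} S_i and assume S_max > 0. Fix δ ∈ (0,1) with δ·|L|/(1−δ) ≥ 1, and let γ ≥ log(δ|L|/(1−δ))/S_max. Define the softmax probabilities p_i = exp(γ S_i)/Σ_{j∈A} exp(γ S_j). Then Σ_{i∈U} p_i ≥ δ and Σ_{i∈L} p_i ≤ 1−δ. -/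
/-- Lemma 2: with coldness parameter `γ ≥ log(δ|L|/(1-δ))/S_max`, the softmax
policy puts mass at least `δ` on the non-suboptimal arms `U` and at most `1-δ`
on the suboptimal arms `L`. -/
theorem dgai_softmax_concentration
    {ι : Type*} [DecidableEq ι]
    (A U L : Finset ι)
    (hpart : U ∪ L = A) (hdisj : Disjoint U L)
    (hUne : U.Nonempty) (hLne : L.Nonempty)
    (S : ι → ℝ)
    (hSU : ∀ i ∈ U, 0 ≤ S i) (hSL : ∀ i ∈ L, S i < 0)
    (Smax : ℝ) (hSmax : Smax = U.sup' hUne S) (hSmaxpos : 0 < Smax)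
    (δ : ℝ) (hδ0 : 0 < δ) (hδ1 : δ < 1)
    (hδL : 1 ≤ δ * (L.card : ℝ) / (1 - δ))
    (γ : ℝ) (hγ : Real.log (δ * (L.card : ℝ) / (1 - δ)) / Smax ≤ γ)
    (p : ι → ℝ)
    (hp : ∀ i, p i = Real.exp (γ * S i) / ∑ j ∈ A, Real.exp (γ * S j)) :
    δ ≤ ∑ i ∈ U, p i ∧ ∑ i ∈ L, p i ≤ 1 - δ := by
  set x : ℝ := δ * (L.card : ℝ) / (1 - δ) with hx
  have hxpos : 0 < x := lt_of_lt_of_le one_pos hδL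
  have hγ0 : 0 ≤ γ := by
    have hlog : 0 ≤ Real.log x := Real.log_nonneg hδL
    have : 0 ≤ Real.log x / Smax := div_nonneg hlog hSmaxpos.le
    linarith
  -- Z splits
  set a : ℝ := ∑ i ∈ U, Real.exp (γ * S i) with ha
  set b : ℝ := ∑ i ∈ L, Real.exp (γ * S i) with hb
  have hZ : ∑ j ∈ A, Real.exp (γ * S j) = a + b := by
    rw [← hpart, Finset.sum_union hdisj]
  have hapos : 0 < a := Finset.sum_pos (fun i _ => Real.exp_pos _) hUne
  have hbpos : 0 < b := Finset.sum_pos (fun i _ => Real.exp_pos _) hLne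
  -- a ≥ exp(γ Smax) ≥ x
  obtain ⟨i0, hi0, hSi0⟩ := Finset.exists_mem_eq_sup' hUne S
  have hexp_le_a : Real.exp (γ * Smax) ≤ a := by
    have := Finset.single_le_sum (f := fun i => Real.exp (γ * S i))
      (fun i _ => (Real.exp_pos _).le) hi0
    rw [hSmax, hSi0]; exact this
  have hx_le : x ≤ Real.exp (γ * Smax) := by
    have hlg : Real.log x ≤ γ * Smax := by
      have := (div_le_iff₀ hSmaxpos).mp hγ
      linarith
    calc x = Real.exp (Real.log x) := (Real.exp_log hxpos).symm
      _ ≤ Real.exp (γ * Smax) := Real.exp_le_exp.mpr hlg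
  -- b ≤ |L|
  have hbL : b ≤ (L.card : ℝ) := by
    have : b ≤ ∑ _i ∈ L, (1 : ℝ) := by
      apply Finset.sum_le_sum
      intro i hi
      have : γ * S i ≤ 0 := mul_nonpos_of_nonneg_of_nonpos hγ0 (hSL i hi).le
      simpa using Real.exp_le_one_iff.mpr this
    simpa using this
  -- key inequality (1-δ) a ≥ δ b
  have hkey : δ * b ≤ (1 - δ) * a := by
    have h1 : δ * b ≤ δ * (L.card : ℝ) := by
      exact mul_le_mul_of_nonneg_left hbL hδ0.le
    have h2 : δ * (L.card : ℝ) ≤ (1 - δ) * a := by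
      have hxa : x ≤ a := le_trans hx_le hexp_le_a
      have h1δ : 0 < 1 - δ := by linarith
      have := mul_le_mul_of_nonneg_left hxa h1δ.le
      rw [hx] at this
      calc δ * (L.card : ℝ) = (1 - δ) * (δ * (L.card : ℝ) / (1 - δ)) := by
            field_simp
        _ ≤ (1 - δ) * a := this
    linarith
  have hZpos : 0 < a + b := by linarith
  have hsU : ∑ i ∈ U, p i = a / (a + b) := by
    simp only [hp, hZ, ← Finset.sum_div, ha]
  have hsL : ∑ i ∈ L, p i = b / (a + b) := by
    simp only [hp, hZ, ← Finset.sum_div, hb]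
  constructor
  · rw [hsU, le_div_iff₀ hZpos]; nlinarith
  · rw [hsL, div_le_iff₀ hZpos]; nlinarith
end

section
/- Let A be a finite index set partitioned into disjoint sets U and L with U nonempty, where S_i ≥ 0 for all i ∈ U and S_i < 0 for all i ∈ L. Let S_max = max_{i∈U} S_i and assume S_max > 0 and L is nonempty. Fix δ ∈ (0,1) with δ|L|/(1−δ) ≥ 1, and let γ ≥ log(δ|L|/(1−δ))/S_max. Then Σ_{i∈L} exp(γ S_i) ≤ ((1−δ)/δ) · Σ_{i∈U} exp(γ S_i). -/
/-- Key intermediate inequality in the proof of Lemma 2: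
`∑_{i∈L} exp(γ S_i) ≤ ((1-δ)/δ) · ∑_{i∈U} exp(γ S_i)`. -/
theorem dgai_softmax_key_inequality
    {ι : Type*} [DecidableEq ι]
    (A U L : Finset ι)
    (hpart : U ∪ L = A) (hdisj : Disjoint U L)
    (hUne : U.Nonempty) (hLne : L.Nonempty)
    (S : ι → ℝ)
    (hSU : ∀ i ∈ U, 0 ≤ S i) (hSL : ∀ i ∈ L, S i < 0)
    (Smax : ℝ) (hSmax : Smax = U.sup' hUne S) (hSmaxpos : 0 < Smax)
    (δ : ℝ) (hδ0 : 0 < δ) (hδ1 : δ < 1)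
    (hδL : 1 ≤ δ * (L.card : ℝ) / (1 - δ))
    (γ : ℝ) (hγ : Real.log (δ * (L.card : ℝ) / (1 - δ)) / Smax ≤ γ) :
    ∑ i ∈ L, Real.exp (γ * S i) ≤ ((1 - δ) / δ) * ∑ i ∈ U, Real.exp (γ * S i) := by
  have hδ1' : 0 < 1 - δ := by linarith
  have hlog : 0 ≤ Real.log (δ * (L.card : ℝ) / (1 - δ)) := Real.log_nonneg hδL
  have hγ0 : 0 ≤ γ := le_trans (div_nonneg hlog hSmaxpos.le) hγ
  -- LHS ≤ |L|
  have hLHS : ∑ i ∈ L, Real.exp (γ * S i) ≤ (L.card : ℝ) := by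
    calc ∑ i ∈ L, Real.exp (γ * S i) ≤ ∑ _i ∈ L, (1 : ℝ) := by
          apply Finset.sum_le_sum
          intro i hi
          have := hSL i hi
          have : γ * S i ≤ 0 := mul_nonpos_of_nonneg_of_nonpos hγ0 this.le
          simpa using Real.exp_le_one_iff.mpr this
      _ = (L.card : ℝ) := by simp
  -- obtain maximizer
  obtain ⟨j, hjU, hjS⟩ := Finset.exists_mem_eq_sup' hUne S
  have hSj : S j = Smax := by rw [hSmax, hjS]
  have hexp : δ * (L.card : ℝ) / (1 - δ) ≤ Real.exp (γ * S j) := by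
    rw [hSj]
    have h1 : Real.log (δ * (L.card : ℝ) / (1 - δ)) ≤ γ * Smax := by
      have := (div_le_iff₀ hSmaxpos).mp hγ
      linarith
    calc δ * (L.card : ℝ) / (1 - δ)
        = Real.exp (Real.log (δ * (L.card : ℝ) / (1 - δ))) := by
          rw [Real.exp_log]; positivity
      _ ≤ Real.exp (γ * Smax) := Real.exp_le_exp.mpr h1
  have hRHS : Real.exp (γ * S j) ≤ ∑ i ∈ U, Real.exp (γ * S i) :=
    Finset.single_le_sum (f := fun i => Real.exp (γ * S i)) (fun i _ => (Real.exp_pos _).le) hjU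
  have hcard : 0 < (L.card : ℝ) := by exact_mod_cast Finset.card_pos.mpr hLne
  have key : (L.card : ℝ) ≤ ((1 - δ) / δ) * ∑ i ∈ U, Real.exp (γ * S i) := by
    have h2 : δ * (L.card : ℝ) / (1 - δ) ≤ ∑ i ∈ U, Real.exp (γ * S i) :=
      le_trans hexp hRHS
    rw [div_le_iff₀ hδ1'] at h2
    rw [div_mul_eq_mul_div, le_div_iff₀ hδ0]
    nlinarith
  linarith
end

section
/- Under the hypotheses of the paper's Lemma 2 — a finite index set A partitioned into U (nonempty, S_i ≥ 0 for i ∈ U) and L (nonempty, S_i < 0 for i ∈ L), S_max = max_{i∈U} S_i > 0, δ ∈ (0,1) with δ|L|/(1−δ) ≥ 1, γ ≥ log(δ|L|/(1−δ))/S_max, and p_i = exp(γ S_i)/Σ_{j∈A} exp(γ S_j) — every individual suboptimal arm i ∈ L satisfies p_i ≤ 1 − δ. -/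
/-- Per-arm corollary of Lemma 2: every individual suboptimal arm `i ∈ L` is
selected with probability at most `1 - δ`. -/
theorem dgai_softmax_suboptimal_arm_small_probability
    {ι : Type*} [DecidableEq ι]
    (A U L : Finset ι)
    (hpart : U ∪ L = A) (hdisj : Disjoint U L)
    (hUne : U.Nonempty) (hLne : L.Nonempty)
    (S : ι → ℝ)
    (hSU : ∀ i ∈ U, 0 ≤ S i) (hSL : ∀ i ∈ L, S i < 0)
    (Smax : ℝ) (hSmax : Smax = U.sup' hUne S) (hSmaxpos : 0 < Smax)
    (δ : ℝ) (hδ0 : 0 < δ) (hδ1 : δ < 1)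
    (hδL : 1 ≤ δ * (L.card : ℝ) / (1 - δ))
    (γ : ℝ) (hγ : Real.log (δ * (L.card : ℝ) / (1 - δ)) / Smax ≤ γ)
    (p : ι → ℝ)
    (hp : ∀ i, p i = Real.exp (γ * S i) / ∑ j ∈ A, Real.exp (γ * S j)) :
    ∀ i ∈ L, p i ≤ 1 - δ := by
  intro i hiL
  obtain ⟨m, hmU, hmS⟩ := Finset.exists_mem_eq_sup' hUne S
  have hmi : m ≠ i := by
    intro h
    exact (Finset.disjoint_left.mp hdisj hmU) (h ▸ hiL)
  set t := δ * (L.card : ℝ) / (1 - δ) with ht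
  have htpos : (0 : ℝ) < t := lt_of_lt_of_le one_pos hδL
  have hδ1' : (0 : ℝ) < 1 - δ := by linarith
  -- γ ≥ 0
  have hγ0 : 0 ≤ γ := le_trans (div_nonneg (Real.log_nonneg hδL) hSmaxpos.le) hγ
  -- exp (γ * Smax) ≥ t
  have hM : t ≤ Real.exp (γ * Smax) := by
    have h1 : Real.log t ≤ γ * Smax := by
      have := (div_le_iff₀ hSmaxpos).mp hγ
      linarith
    calc t = Real.exp (Real.log t) := (Real.exp_log htpos).symm
      _ ≤ Real.exp (γ * Smax) := Real.exp_le_exp.mpr h1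
  -- δ/(1-δ) ≤ t
  have hcard : (1 : ℝ) ≤ (L.card : ℝ) := by
    exact_mod_cast Nat.one_le_iff_ne_zero.mpr (Finset.card_ne_zero_of_mem hiL)
  have hδt : δ / (1 - δ) ≤ t := by
    rw [ht]
    gcongr
    nlinarith
  -- exp (γ * S i) ≤ 1
  have hx : Real.exp (γ * S i) ≤ 1 := by
    rw [show (1:ℝ) = Real.exp 0 by simp]
    exact Real.exp_le_exp.mpr (mul_nonpos_of_nonneg_of_nonpos hγ0 (hSL i hiL).le)
  -- sum bound
  have hmA : m ∈ A := by rw [← hpart]; exact Finset.mem_union_left _ hmU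
  have hiA : i ∈ A := by rw [← hpart]; exact Finset.mem_union_right _ hiL
  have hsum : Real.exp (γ * Smax) + Real.exp (γ * S i)
      ≤ ∑ j ∈ A, Real.exp (γ * S j) := by
    have hsub : ({m, i} : Finset ι) ⊆ A := by
      intro x hx
      rcases Finset.mem_insert.mp hx with h | h
      · exact h ▸ hmA
      · exact (Finset.mem_singleton.mp h) ▸ hiA
    calc Real.exp (γ * Smax) + Real.exp (γ * S i)
        = ∑ j ∈ ({m, i} : Finset ι), Real.exp (γ * S j) := by
          rw [Finset.sum_pair hmi, hSmax, hmS]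
      _ ≤ ∑ j ∈ A, Real.exp (γ * S j) :=
          Finset.sum_le_sum_of_subset_of_nonneg hsub
            (fun j _ _ => (Real.exp_pos _).le)
  have hSumpos : 0 < ∑ j ∈ A, Real.exp (γ * S j) :=
    Finset.sum_pos (fun j _ => Real.exp_pos _) ⟨i, hiA⟩
  rw [hp, div_le_iff₀ hSumpos]
  have hMδ : δ ≤ (1 - δ) * Real.exp (γ * Smax) := by
    have := (div_le_iff₀ hδ1').mp (le_trans hδt hM)
    linarith
  have hxpos : 0 < Real.exp (γ * S i) := Real.exp_pos _
  nlinarith [mul_le_mul_of_nonneg_left hsum hδ1'.le]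
end
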